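/- If Z is standard normal and z(u,v) = -ln(D/v)/(σ₁√(u-t)) + α̃√(u-t)/σ₁ + σ₁(1/2 + α/σ₁²)(T-u)/√(u-t), where v > D and 1/2 + α/σ₁² > 0, then z(u,v) > -|α̃|√T/σ₁ for all t < u < T; moreover if additionally z(u,v) ≤ 1 and h = √((T-u)/(u-t)) ≥ 1, then P(z(u,v) - h < Z < z(u,v)) ≥ ε for an explicit ε > 0 depending only on α̃√T/σ₁ (e.g. ε = φ(max(|z|, |z-1|)) evaluated at the worst case), independent of t, u, v. -/

import Mathlib

/-!
The first term of `zfun` is nonnegative because `v > D`, the last one is positive because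
`1/2 + α/σ₁² > 0`, and the middle one is at least `-|α̃|√T/σ₁` because `u - t ≤ T`.
Writing `L ≤ 0` for this bound, `L < z ≤ 1` puts the unit interval `(z - 1, z) ⊆ (z - h, z)`
inside `(L - 1, 1)`, where the standard normal density is at least its value at `1 - L`.
-/

open MeasureTheory ProbabilityTheory

/-- The quantity `z(u,v)` from the boundedness proof. -/
noncomputable def zfun (μ₁ σ₁ α D T t u v : ℝ) : ℝ :=
  -Real.log (D / v) / (σ₁ * Real.sqrt (u - t))
    + (μ₁ + 3 / 2 * σ₁ ^ 2) * Real.sqrt (u - t) / σ₁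
    + σ₁ * (1 / 2 + α / σ₁ ^ 2) * (T - u) / Real.sqrt (u - t)

open Set

namespace ProbabilityTheory

lemma gaussianPDFReal_le_of_abs_sub_le (μ : ℝ) (v : NNReal) {x y : ℝ}
    (h : |x - μ| ≤ |y - μ|) : gaussianPDFReal μ v y ≤ gaussianPDFReal μ v x := by
  have hsq : (x - μ) ^ 2 ≤ (y - μ) ^ 2 := sq_le_sq.mpr h
  unfold gaussianPDFReal
  gcongr

lemma mul_sub_le_toReal_gaussianReal_Ioo (μ : ℝ) {v : NNReal} (hv : v ≠ 0) {a b c : ℝ}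
    (hab : a ≤ b) (hc : ∀ x ∈ Ioo a b, c ≤ gaussianPDFReal μ v x) :
    c * (b - a) ≤ (gaussianReal μ v (Ioo a b)).toReal := by
  rw [gaussianReal_apply_eq_integral _ hv, ENNReal.toReal_ofReal
    (setIntegral_nonneg measurableSet_Ioo fun x _ ↦ gaussianPDFReal_nonneg μ v x)]
  simpa [Real.volume_real_Ioo_of_le hab] using setIntegral_ge_of_const_le_real measurableSet_Ioo
    (by simp) hc (integrable_gaussianPDFReal μ v).integrableOn

lemma gaussianPDFReal_le_toReal_gaussianReal_Ioo {L z h : ℝ} (hL : L ≤ 0) (hLz : L < z)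
    (hz : z ≤ 1) (hh : 1 ≤ h) :
    gaussianPDFReal 0 1 (1 - L) ≤ (gaussianReal 0 1 (Ioo (z - h) z)).toReal := by
  have hdensity : ∀ x ∈ Ioo (z - 1) z, gaussianPDFReal 0 1 (1 - L) ≤ gaussianPDFReal 0 1 x :=
    fun x hx ↦ gaussianPDFReal_le_of_abs_sub_le 0 1 <| by
      rw [sub_zero, sub_zero, abs_of_nonneg (by linarith : (0 : ℝ) ≤ 1 - L)]
      exact abs_le.mpr ⟨by linarith [hx.1], by linarith [hx.2]⟩
  calc gaussianPDFReal 0 1 (1 - L) = gaussianPDFReal 0 1 (1 - L) * (z - (z - 1)) := by ring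
    _ ≤ (gaussianReal 0 1 (Ioo (z - 1) z)).toReal :=
      mul_sub_le_toReal_gaussianReal_Ioo 0 one_ne_zero (by linarith) hdensity
    _ ≤ (gaussianReal 0 1 (Ioo (z - h) z)).toReal :=
      measureReal_mono (Ioo_subset_Ioo_left (by linarith))

end ProbabilityTheory

lemma neg_abs_mul_sqrt_div_le {c σ s T : ℝ} (hσ : 0 < σ) (hsT : s ≤ T) :
    -|c| * Real.sqrt T / σ ≤ c * Real.sqrt s / σ := by
  refine div_le_div_of_nonneg_right ?_ hσ.le
  calc -|c| * Real.sqrt T ≤ -|c| * Real.sqrt s :=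
        mul_le_mul_of_nonpos_left (Real.sqrt_le_sqrt hsT) (neg_nonpos.mpr (abs_nonneg c))
    _ ≤ c * Real.sqrt s := mul_le_mul_of_nonneg_right (neg_abs_le c) (Real.sqrt_nonneg s)

lemma neg_abs_mul_sqrt_div_lt_zfun {μ₁ σ₁ α D T t u v : ℝ} (hσ₁ : 0 < σ₁) (hD : 0 < D)
    (hα : 0 < 1 / 2 + α / σ₁ ^ 2) (ht : 0 ≤ t) (htu : t < u) (huT : u < T) (hDv : D < v) :
    -|μ₁ + 3 / 2 * σ₁ ^ 2| * Real.sqrt T / σ₁ < zfun μ₁ σ₁ α D T t u v := by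
  have hs : 0 < Real.sqrt (u - t) := Real.sqrt_pos.mpr (by linarith)
  have hlog : 0 ≤ -Real.log (D / v) / (σ₁ * Real.sqrt (u - t)) := by
    have : Real.log (D / v) ≤ 0 :=
      Real.log_nonpos (div_nonneg hD.le (by linarith)) ((div_le_one (by linarith)).mpr hDv.le)
    exact div_nonneg (neg_nonneg.mpr this) (mul_pos hσ₁ hs).le
  have hdrift : 0 < σ₁ * (1 / 2 + α / σ₁ ^ 2) * (T - u) / Real.sqrt (u - t) := by
    have : 0 < T - u := by linarith
    positivity
  have hmiddle := neg_abs_mul_sqrt_div_le (c := μ₁ + 3 / 2 * σ₁ ^ 2) hσ₁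
    (by linarith : u - t ≤ T)
  unfold zfun
  linarith

theorem zfun_lower_bound_and_gaussian_mass_general (μ₁ σ₁ α D T : ℝ)
    (hσ₁ : 0 < σ₁) (hD : 0 < D)
    (hα : 0 < 1 / 2 + α / σ₁ ^ 2) :
    (∀ t u v : ℝ, 0 ≤ t → t < u → u < T → D < v →
      zfun μ₁ σ₁ α D T t u v >
        -|μ₁ + 3 / 2 * σ₁ ^ 2| * Real.sqrt T / σ₁) ∧
    (∃ ε : ℝ, 0 < ε ∧ ∀ t u v : ℝ, 0 ≤ t → t < u → u < T → D < v →
      zfun μ₁ σ₁ α D T t u v ≤ 1 →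
      1 ≤ Real.sqrt ((T - u) / (u - t)) →
      ε ≤ (gaussianReal 0 1 (Set.Ioo
            (zfun μ₁ σ₁ α D T t u v - Real.sqrt ((T - u) / (u - t)))
            (zfun μ₁ σ₁ α D T t u v))).toReal) := by
  have hL : -|μ₁ + 3 / 2 * σ₁ ^ 2| * Real.sqrt T / σ₁ ≤ 0 := by
    refine div_nonpos_of_nonpos_of_nonneg ?_ hσ₁.le
    exact mul_nonpos_of_nonpos_of_nonneg (neg_nonpos.mpr (abs_nonneg _)) (Real.sqrt_nonneg T)
  refine ⟨fun t u v ht htu huT hDv ↦ neg_abs_mul_sqrt_div_lt_zfun hσ₁ hD hα ht htu huT hDv,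
    gaussianPDFReal 0 1 (1 + |μ₁ + 3 / 2 * σ₁ ^ 2| * Real.sqrt T / σ₁),
    gaussianPDFReal_pos _ _ _ one_ne_zero, fun t u v ht htu huT hDv hz hh ↦ ?_⟩
  simpa only [neg_mul, neg_div, sub_neg_eq_add] using gaussianPDFReal_le_toReal_gaussianReal_Ioo hL
    (neg_abs_mul_sqrt_div_lt_zfun hσ₁ hD hα ht htu huT hDv) hz hh

theorem zfun_lower_bound_and_gaussian_mass (μ₁ σ₁ α D T : ℝ)
    (hσ₁ : 0 < σ₁) (hD : 0 < D) (hT : 0 < T)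
    (hα : 0 < 1 / 2 + α / σ₁ ^ 2) :
    (∀ t u v : ℝ, 0 ≤ t → t < u → u < T → D < v →
      zfun μ₁ σ₁ α D T t u v >
        -|μ₁ + 3 / 2 * σ₁ ^ 2| * Real.sqrt T / σ₁) ∧
    (∃ ε : ℝ, 0 < ε ∧ ∀ t u v : ℝ, 0 ≤ t → t < u → u < T → D < v →
      zfun μ₁ σ₁ α D T t u v ≤ 1 →
      1 ≤ Real.sqrt ((T - u) / (u - t)) →
      ε ≤ (gaussianReal 0 1 (Set.Ioo
            (zfun μ₁ σ₁ α D T t u v - Real.sqrt ((T - u) / (u - t)))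
            (zfun μ₁ σ₁ α D T t u v))).toReal) :=
  zfun_lower_bound_and_gaussian_mass_general μ₁ σ₁ α D T hσ₁ hD hα
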